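/- arXiv:2605.11357 — 6 statements merged into one kernel-verified Lean document; each statement's English description precedes it below -/
import Mathlib

section
/- Let z ∈ ℝ^K have sorted entries z_{(1)} ≥ ⋯ ≥ z_{(K)}, and let k⋆ = max{k : 1 + k·z_{(k)} > ∑_{j≤k} z_{(j)}}. Then the threshold τ of the sparsemax projection equals (∑_{j≤k⋆} z_{(j)} − 1)/k⋆, i.e., with this τ one has ∑_i max{z_i − τ, 0} = 1 and (sparsemax(z))_i = max{z_i − τ, 0}. -/
/-! On a sorted vector `w`, the index `k⋆` separates the coordinates above the threshold
`τ = (∑_{j ≤ k⋆} w_j - 1) / (k⋆ + 1)` from those below it: `w_{k⋆} > τ` is the defining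
inequality of `k⋆`, and its failure at `k⋆ + 1` says `w_{k⋆+1} ≤ τ`. Hence the clipped vector
`max (z - τ) 0` sums to `1`. Each of its coordinates minimizes the Lagrangian
`(r - z_i)² + 2 τ r` over `r ≥ 0`, which makes it the projection onto the simplex; the projection
is unique by strict convexity of the squared distance. -/

/-- `p` is the Euclidean projection of `z` onto the probability simplex `Δ^{K-1}`. -/
def IsSparsemax {K : ℕ} (z p : Fin K → ℝ) : Prop :=
  (∀ i, 0 ≤ p i) ∧ (∑ i, p i = 1) ∧
    ∀ q : Fin K → ℝ, (∀ i, 0 ≤ q i) → (∑ i, q i = 1) →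
      ∑ i, (p i - z i) ^ 2 ≤ ∑ i, (q i - z i) ^ 2

open Finset

section Threshold

variable {K : ℕ} {w : Fin K → ℝ}

noncomputable def supportThreshold (w : Fin K → ℝ) (k : Fin K) : ℝ :=
  (∑ j ∈ Iic k, w j - 1) / ((k : ℕ) + 1)

theorem supportThreshold_lt_iff (k : Fin K) :
    supportThreshold w k < w k ↔ ∑ j ∈ Iic k, w j < 1 + ((k : ℕ) + 1 : ℝ) * w k := by
  rw [supportThreshold, div_lt_iff₀ (by positivity)]
  constructor <;> intro h <;> linarith

theorem Fin.sum_Iic_of_val_eq_succ {M : Type*} [AddCommMonoid M] (f : Fin K → M) {k k' : Fin K}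
    (hk' : (k' : ℕ) = k + 1) : ∑ j ∈ Iic k', f j = ∑ j ∈ Iic k, f j + f k' := by
  have hIic : Iic k' = insert k' (Iic k) := by
    ext i
    simp only [mem_Iic, mem_insert, Fin.le_def, Fin.ext_iff]
    omega
  rw [hIic, sum_insert (by simp [Fin.le_def, hk']), add_comm]

theorem le_supportThreshold_of_val_eq_succ {k k' : Fin K} (hk' : (k' : ℕ) = k + 1)
    (hfail : 1 + ((k' : ℕ) + 1 : ℝ) * w k' ≤ ∑ j ∈ Iic k', w j) :
    w k' ≤ supportThreshold w k := by
  rw [Fin.sum_Iic_of_val_eq_succ w hk', hk'] at hfail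
  rw [supportThreshold, le_div_iff₀ (by positivity)]
  push_cast at hfail
  linarith

theorem Antitone.le_supportThreshold_of_lt (hsort : Antitone w) {k : Fin K}
    (hmax : ∀ k' : Fin K, ∑ j ∈ Iic k', w j < 1 + ((k' : ℕ) + 1 : ℝ) * w k' → k' ≤ k)
    {j : Fin K} (hkj : k < j) : w j ≤ supportThreshold w k := by
  have hk'K : (k : ℕ) + 1 < K := lt_of_le_of_lt hkj j.isLt
  set k' : Fin K := ⟨(k : ℕ) + 1, hk'K⟩
  have hfail : 1 + ((k' : ℕ) + 1 : ℝ) * w k' ≤ ∑ j ∈ Iic k', w j :=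
    not_lt.mp fun h => absurd (hmax k' h) (by simp [k', Fin.le_def])
  exact (hsort (show k' ≤ j from hkj)).trans (le_supportThreshold_of_val_eq_succ rfl hfail)

theorem sum_max_sub_supportThreshold {k : Fin K} (hin : ∀ j ≤ k, supportThreshold w k ≤ w j)
    (hout : ∀ j, k < j → w j ≤ supportThreshold w k) :
    ∑ j, max (w j - supportThreshold w k) 0 = 1 := by
  have hinside : ∑ j ∈ Iic k, max (w j - supportThreshold w k) 0 =
      ∑ j ∈ Iic k, w j - ((k : ℕ) + 1) * supportThreshold w k := by
    rw [sum_congr rfl fun j hj => max_eq_left (sub_nonneg.mpr (hin j (mem_Iic.mp hj))),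
      sum_sub_distrib, sum_const, Fin.card_Iic, nsmul_eq_mul]
    push_cast
    ring
  have houtside : ∑ j ∈ (Iic k)ᶜ, max (w j - supportThreshold w k) 0 = 0 :=
    sum_eq_zero fun j hj =>
      max_eq_right (sub_nonpos.mpr (hout j (not_le.mp (mem_Iic.not.mp (mem_compl.mp hj)))))
  rw [← sum_add_sum_compl (Iic k), hinside, houtside, add_zero, supportThreshold]
  field_simp
  ring

end Threshold

section Projection

variable {K : ℕ} {z : Fin K → ℝ}

-- `(r - x)² + 2 τ r = (r - (x - τ))² + 2 τ x - τ²`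
theorem sq_max_sub_sub_add_le {x τ r : ℝ} (hr : 0 ≤ r) :
    (max (x - τ) 0 - x) ^ 2 + 2 * τ * max (x - τ) 0 ≤ (r - x) ^ 2 + 2 * τ * r := by
  rcases le_total (x - τ) 0 with h | h
  · rw [max_eq_right h]
    nlinarith
  · rw [max_eq_left h]
    nlinarith [sq_nonneg (r - (x - τ))]

theorem isSparsemax_max_sub {τ : ℝ} (hsum : ∑ i, max (z i - τ) 0 = 1) :
    IsSparsemax z fun i => max (z i - τ) 0 := by
  refine ⟨fun i => le_max_right _ _, hsum, fun r hr hrsum => ?_⟩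
  have hlagrange :=
    sum_le_sum fun i (_ : i ∈ univ) => sq_max_sub_sub_add_le (x := z i) (τ := τ) (hr i)
  rw [sum_add_distrib, sum_add_distrib, ← mul_sum, ← mul_sum, hsum, hrsum] at hlagrange
  linarith

theorem IsSparsemax.eq {p q : Fin K → ℝ} (hp : IsSparsemax z p) (hq : IsSparsemax z q) :
    p = q := by
  obtain ⟨hp0, hp1, hpmin⟩ := hp
  obtain ⟨hq0, hq1, hqmin⟩ := hq
  set m : Fin K → ℝ := fun i => (p i + q i) / 2
  have hm0 : ∀ i, 0 ≤ m i := fun i => div_nonneg (add_nonneg (hp0 i) (hq0 i)) zero_le_two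
  have hm1 : ∑ i, m i = 1 := by
    simp only [m, ← sum_div, sum_add_distrib, hp1, hq1]
    norm_num
  have hparallelogram : ∑ i, (m i - z i) ^ 2 =
      (∑ i, (p i - z i) ^ 2 + ∑ i, (q i - z i) ^ 2) / 2 - (∑ i, (p i - q i) ^ 2) / 4 := by
    rw [← sum_add_distrib, sum_div, sum_div, ← sum_sub_distrib]
    exact sum_congr rfl fun i _ => by ring
  have hpq : ∑ i, (p i - z i) ^ 2 = ∑ i, (q i - z i) ^ 2 :=
    le_antisymm (hpmin q hq0 hq1) (hqmin p hp0 hp1)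
  have hdist : ∑ i, (p i - q i) ^ 2 = 0 :=
    le_antisymm (by linarith [hpmin m hm0 hm1]) (sum_nonneg fun i _ => sq_nonneg _)
  funext i
  have hi := (sum_eq_zero_iff_of_nonneg fun i _ => sq_nonneg (p i - q i)).mp hdist i (mem_univ i)
  exact sub_eq_zero.mp (pow_eq_zero_iff two_ne_zero |>.mp hi)

end Projection

theorem sparsemax_threshold_formula {K : ℕ} (z w : Fin K → ℝ) (σ : Equiv.Perm (Fin K))
    (hw : w = z ∘ σ) (hsort : Antitone w) (kstar : Fin K)
    (hks : 1 + ((kstar : ℕ) + 1 : ℝ) * w kstar > ∑ j ∈ Finset.Iic kstar, w j)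
    (hmax : ∀ k : Fin K,
      (1 + ((k : ℕ) + 1 : ℝ) * w k > ∑ j ∈ Finset.Iic k, w j) → k ≤ kstar)
    (τ : ℝ) (hτ : τ = (∑ j ∈ Finset.Iic kstar, w j - 1) / ((kstar : ℕ) + 1))
    (p : Fin K → ℝ) (hp : IsSparsemax z p) :
    (∑ i, max (z i - τ) 0 = 1) ∧ ∀ i, p i = max (z i - τ) 0 := by
  replace hτ : τ = supportThreshold w kstar := hτ
  have hks' : supportThreshold w kstar < w kstar := (supportThreshold_lt_iff kstar).mpr hks
  have hsorted : ∑ j, max (w j - τ) 0 = 1 :=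
    hτ ▸ sum_max_sub_supportThreshold (fun j hj => hks'.le.trans (hsort hj))
      fun j hj => hsort.le_supportThreshold_of_lt hmax hj
  have hsum : ∑ i, max (z i - τ) 0 = 1 := by
    rw [← hsorted, hw, ← Equiv.sum_comp σ]
    rfl
  exact ⟨hsum, fun i => congrFun (hp.eq (isSparsemax_max_sub hsum)) i⟩
end

section
/- Let i be an honest node with neighbor set N_i in a graph with honest set H satisfying |N_i ∩ H| > |N_i ∩ B| (honest majority among neighbors, where B is the complement of H). Let D_H = max_{u,v ∈ H} ‖x_u − x_v‖_∞ be the honest diameter, let cm_i be the coordinate-wise median of all neighbor states {x_j : j ∈ N_i}, and let L_j = ‖x_j − cm_i‖_∞. Define weights p = sparsemax((−η L_j)_{j ∈ N_i}) with η > 0. Then every neighbor j with p_j > 0 satisfies L_j < D_H + 1/(η |N_i ∩ H|). -/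
/-!
Sparsemax is a projection onto the simplex, so moving a little mass from a support point `j`
to any other point `l` cannot decrease the distance to `z`; to first order this says
`z l - p l ≤ z j - p j < z j`. Summing over the honest neighbours, whose total weight is at
most `1`, gives `|N_i ∩ H| · z j > ∑ z l - 1`. Finally, with an honest majority every
coordinate of the median is squeezed between two honest values, so each honest neighbour has
`L_l ≤ D_H`.
-/

/-- `m` is a median of the values `f j`, `j ∈ s`. -/
def IsMedian {ι : Type*} (s : Finset ι) (f : ι → ℝ) (m : ℝ) : Prop :=
  s.card ≤ 2 * (s.filter fun j => f j ≤ m).card ∧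
  s.card ≤ 2 * (s.filter fun j => m ≤ f j).card

/-- `p` restricted to `s` is the Euclidean projection of `z` (restricted to `s`)
onto the probability simplex over `s`. -/
def IsSparsemaxOn {ι : Type*} (s : Finset ι) (z p : ι → ℝ) : Prop :=
  (∀ j ∈ s, 0 ≤ p j) ∧ (∑ j ∈ s, p j = 1) ∧
    ∀ q : ι → ℝ, (∀ j ∈ s, 0 ≤ q j) → (∑ j ∈ s, q j = 1) →
      ∑ j ∈ s, (p j - z j) ^ 2 ≤ ∑ j ∈ s, (q j - z j) ^ 2

open Finset

section Sparsemax

variable {ι : Type*} [DecidableEq ι] {s : Finset ι} {z p : ι → ℝ} {j l : ι}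

lemma sum_mul_single_sub_single (f : ι → ℝ) (hj : j ∈ s) (hl : l ∈ s) :
    ∑ m ∈ s, f m * (Pi.single l 1 - Pi.single j 1 : ι → ℝ) m = f l - f j := by
  simp only [Pi.sub_apply, Pi.single_apply, mul_sub, mul_ite, mul_one, mul_zero,
    sum_sub_distrib, sum_ite_eq', hj, hl, if_true]

lemma IsSparsemaxOn.sub_le_sub_add (h : IsSparsemaxOn s z p) (hj : j ∈ s) (hl : l ∈ s)
    (hlj : l ≠ j) {t : ℝ} (ht : 0 < t) (htp : t ≤ p j) :
    p j - z j ≤ p l - z l + t := by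
  obtain ⟨hnn, hsum, hopt⟩ := h
  set e : ι → ℝ := Pi.single l 1 - Pi.single j 1
  have he : ∑ m ∈ s, e m = 0 := by
    simpa only [one_mul, sub_self] using sum_mul_single_sub_single (fun _ => (1 : ℝ)) hj hl
  have hej : e j = -1 := by
    simp only [e, Pi.sub_apply, Pi.single_eq_same, Pi.single_eq_of_ne hlj.symm, zero_sub]
  have hee : ∑ m ∈ s, e m * e m = 2 := by
    rw [sum_mul_single_sub_single e hj hl, hej]
    simp only [e, Pi.sub_apply, Pi.single_eq_same, Pi.single_eq_of_ne hlj]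
    norm_num
  have hq_nonneg : ∀ m ∈ s, 0 ≤ p m + t * e m := by
    intro m hm
    by_cases hmj : m = j
    · rw [hmj, hej]
      linarith
    · have : 0 ≤ e m := by
        simp only [e, Pi.sub_apply, Pi.single_eq_of_ne hmj, sub_zero, Pi.single_apply]
        split_ifs <;> norm_num
      have := hnn m hm
      positivity
  have hq_sum : ∑ m ∈ s, (p m + t * e m) = 1 := by
    rw [sum_add_distrib, ← mul_sum, he, hsum, mul_zero, add_zero]
  have hopt := hopt _ hq_nonneg hq_sum
  -- the perturbed objective is the old one plus `2t((p l - z l) - (p j - z j)) + 2t²`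
  have hexpand : ∑ m ∈ s, (p m + t * e m - z m) ^ 2 = ∑ m ∈ s, (p m - z m) ^ 2
      + 2 * t * ∑ m ∈ s, (p m - z m) * e m + t ^ 2 * ∑ m ∈ s, e m * e m := by
    simp only [mul_sum, ← sum_add_distrib]
    exact sum_congr rfl fun m _ => by ring
  rw [hexpand, hee, sum_mul_single_sub_single _ hj hl] at hopt
  nlinarith

lemma IsSparsemaxOn.sub_le_sub_of_pos (h : IsSparsemaxOn s z p) (hj : j ∈ s) (hl : l ∈ s)
    (hpj : 0 < p j) : p j - z j ≤ p l - z l := by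
  rcases eq_or_ne l j with rfl | hlj
  · exact le_rfl
  refine le_of_forall_pos_le_add fun ε hε => ?_
  calc p j - z j ≤ p l - z l + min ε (p j) :=
        h.sub_le_sub_add hj hl hlj (lt_min hε hpj) (min_le_right _ _)
    _ ≤ p l - z l + ε := by gcongr; exact min_le_left _ _

lemma IsSparsemaxOn.sum_sub_one_lt (h : IsSparsemaxOn s z p) {T : Finset ι} (hT : T ⊆ s)
    (hTne : T.Nonempty) (hj : j ∈ s) (hpj : 0 < p j) :
    ∑ l ∈ T, z l - 1 < T.card * z j := by
  have hpT : ∑ l ∈ T, p l ≤ 1 :=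
    h.2.1 ▸ sum_le_sum_of_subset_of_nonneg hT fun m hm _ => h.1 m hm
  have hlt : ∑ l ∈ T, (z l - p l) < ∑ _l ∈ T, z j :=
    sum_lt_sum_of_nonempty hTne fun l hl => by
      have := h.sub_le_sub_of_pos hj (hT hl) hpj
      linarith
  rw [sum_sub_distrib, sum_const, nsmul_eq_mul] at hlt
  linarith

lemma IsSparsemaxOn.sub_inv_card_lt (h : IsSparsemaxOn s z p) {T : Finset ι} (hT : T ⊆ s)
    (hTne : T.Nonempty) {c : ℝ} (hc : ∀ l ∈ T, c ≤ z l) (hj : j ∈ s) (hpj : 0 < p j) :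
    c - 1 / T.card < z j := by
  have hcard : (0 : ℝ) < T.card := by exact_mod_cast hTne.card_pos
  have hsum : T.card * c ≤ ∑ l ∈ T, z l := by
    simpa using card_nsmul_le_sum T z c hc
  have := h.sum_sub_one_lt hT hTne hj hpj
  rw [sub_lt_iff_lt_add, ← sub_lt_iff_lt_add', ← mul_lt_mul_iff_right₀ hcard, mul_sub,
    mul_one_div_cancel hcard.ne']
  linarith

end Sparsemax

section Median

variable {ι : Type*} [Fintype ι] [DecidableEq ι] {s H : Finset ι}

lemma exists_mem_inter_of_card_lt {P : ι → Prop} [DecidablePred P]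
    (hmaj : (s ∩ Hᶜ).card < (s ∩ H).card) (hP : s.card ≤ 2 * (s.filter P).card) :
    ∃ u ∈ s ∩ H, P u := by
  by_contra! hnone
  have hsub : s.filter P ⊆ s ∩ Hᶜ := fun m hm => by
    obtain ⟨hms, hmP⟩ := mem_filter.1 hm
    exact mem_inter.2 ⟨hms, mem_compl.2 fun hmH => hnone m (mem_inter.2 ⟨hms, hmH⟩) hmP⟩
  have hsplit : (s ∩ H).card + (s ∩ Hᶜ).card = s.card := by
    rw [← sdiff_eq_inter_compl]
    exact card_inter_add_card_sdiff s H
  have := card_le_card hsub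
  omega

lemma IsMedian.abs_sub_le_of_card_lt {f : ι → ℝ} {m D : ℝ} {l : ι} (hm : IsMedian s f m)
    (hmaj : (s ∩ Hᶜ).card < (s ∩ H).card) (hD : ∀ u ∈ s ∩ H, |f l - f u| ≤ D) :
    |f l - m| ≤ D := by
  obtain ⟨u, hu, hum⟩ := exists_mem_inter_of_card_lt hmaj hm.1
  obtain ⟨w, hw, hwm⟩ := exists_mem_inter_of_card_lt hmaj hm.2
  have hlu := abs_le.1 (hD u hu)
  have hlw := abs_le.1 (hD w hw)
  exact abs_le.2 ⟨by linarith, by linarith⟩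

lemma norm_sub_le_of_isMedian {κ : Type*} [Fintype κ] {x : ι → κ → ℝ} {cm : κ → ℝ}
    {D : ℝ} {l : ι} (hcm : ∀ k, IsMedian s (fun j => x j k) (cm k))
    (hmaj : (s ∩ Hᶜ).card < (s ∩ H).card) (hD₀ : 0 ≤ D)
    (hD : ∀ u ∈ s ∩ H, ‖x l - x u‖ ≤ D) : ‖x l - cm‖ ≤ D := by
  refine (pi_norm_le_iff_of_nonneg hD₀).2 fun k => ?_
  rw [Pi.sub_apply, Real.norm_eq_abs]
  refine (hcm k).abs_sub_le_of_card_lt hmaj fun u hu => ?_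
  simpa only [Pi.sub_apply, Real.norm_eq_abs] using (norm_le_pi_norm (x l - x u) k).trans (hD u hu)

end Median

theorem truncation_bound {V : Type*} [Fintype V] [DecidableEq V] {d : ℕ}
    (H Ni : Finset V) (i : V) (hi : i ∈ H) (x : V → Fin d → ℝ)
    (hmaj : (Ni ∩ Hᶜ).card < (Ni ∩ H).card)
    (cm : Fin d → ℝ) (hcm : ∀ k, IsMedian Ni (fun j => x j k) (cm k))
    (η : ℝ) (hη : 0 < η)
    (p : V → ℝ) (hp : IsSparsemaxOn Ni (fun j => -η * ‖x j - cm‖) p)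
    (DH : ℝ)
    (hDH : DH = (H ×ˢ H).sup' ⟨(i, i), Finset.mem_product.mpr ⟨hi, hi⟩⟩
      fun uv => ‖x uv.1 - x uv.2‖) :
    ∀ j ∈ Ni, 0 < p j → ‖x j - cm‖ < DH + 1 / (η * ((Ni ∩ H).card : ℝ)) := by
  intro j hj hpj
  have hdiam : ∀ u ∈ H, ∀ v ∈ H, ‖x u - x v‖ ≤ DH := fun u hu v hv => by
    rw [hDH]
    exact le_sup' (fun uv : V × V => ‖x uv.1 - x uv.2‖) (b := (u, v))
      (mem_product.2 ⟨hu, hv⟩)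
  have hDH₀ : 0 ≤ DH := (norm_nonneg _).trans (hdiam i hi i hi)
  have hhonest : ∀ l ∈ Ni ∩ H, -η * DH ≤ -η * ‖x l - cm‖ := fun l hl =>
    mul_le_mul_of_nonpos_left (norm_sub_le_of_isMedian hcm hmaj hDH₀
      fun u hu => hdiam l (mem_inter.1 hl).2 u (mem_inter.1 hu).2) (by linarith)
  have hne : (Ni ∩ H).Nonempty := card_pos.1 (hmaj.trans_le' (Nat.zero_le _))
  have key := hp.sub_inv_card_lt inter_subset_left hne hhonest hj hpj
  have hscale : η * (1 / (η * (Ni ∩ H).card)) = 1 / (Ni ∩ H).card := by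
    field_simp
  refine lt_of_mul_lt_mul_left ?_ hη.le
  rw [mul_add, hscale]
  linarith
end

section
/- Under the honest-majority assumption |N_i ∩ H| > |N_i ∩ B| for each honest node i, suppose all honest nodes share a common state: x_i = x̄ for all i ∈ H, and every Byzantine neighbor k ∈ N_i ∩ B satisfies ‖x_k − x̄‖_∞ ≥ 1/(η δ_min), where δ_min = min_{i ∈ H} |N_i ∩ H| and η > 0. Then the sparsemax weights p = sparsemax((−η ‖x_j − cm_i‖_∞)_{j ∈ N_i}) assign p_j = 0 for every Byzantine neighbor j ∈ N_i ∩ B and p_j = 1/|N_i ∩ H| for every honest neighbor j ∈ N_i ∩ H. -/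
open Finset

section Median

variable {ι : Type*} [DecidableEq ι] {s T : Finset ι}

lemma two_mul_card_filter_lt_of_card_sdiff_lt (hmaj : #(s \ T) < #(s ∩ T))
    {P : ι → Prop} [DecidablePred P] (hP : ∀ j ∈ s ∩ T, ¬ P j) :
    2 * #(s.filter P) < #s := by
  have hsub : s.filter P ⊆ s \ T := fun j hj => by
    rw [mem_filter] at hj
    exact mem_sdiff.2 ⟨hj.1, fun hjT => hP j (mem_inter.2 ⟨hj.1, hjT⟩) hj.2⟩
  have := card_le_card hsub
  have := card_inter_add_card_sdiff s T
  omega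

theorem IsMedian.eq_of_card_sdiff_lt {f : ι → ℝ} {m c : ℝ} (hm : IsMedian s f m)
    (hmaj : #(s \ T) < #(s ∩ T)) (hfc : ∀ j ∈ s ∩ T, f j = c) : m = c := by
  rcases lt_trichotomy m c with hlt | heq | hgt
  · have := two_mul_card_filter_lt_of_card_sdiff_lt hmaj (P := fun j => f j ≤ m)
      fun j hj h => hlt.not_ge (hfc j hj ▸ h)
    exact absurd hm.1 this.not_ge
  · exact heq
  · have := two_mul_card_filter_lt_of_card_sdiff_lt hmaj (P := fun j => m ≤ f j)
      fun j hj h => hgt.not_ge (hfc j hj ▸ h)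
    exact absurd hm.2 this.not_ge

end Median

section Sparsemax

variable {ι : Type*} {s : Finset ι} {z p : ι → ℝ}

lemma sum_mul_sub_max_nonneg (τ : ℝ) (hτ : ∑ j ∈ s, max (z j - τ) 0 = 1) {r : ι → ℝ}
    (hr0 : ∀ j ∈ s, 0 ≤ r j) (hr1 : ∑ j ∈ s, r j = 1) :
    0 ≤ ∑ j ∈ s, (r j - max (z j - τ) 0) * (max (z j - τ) 0 - z j) := by
  have hpt : ∀ j ∈ s, -τ * (r j - max (z j - τ) 0) ≤
      (r j - max (z j - τ) 0) * (max (z j - τ) 0 - z j) := by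
    intro j hj
    rcases le_total (z j - τ) 0 with h | h
    · rw [max_eq_right h]
      nlinarith [hr0 j hj]
    · rw [max_eq_left h]
      linarith
  calc 0 = -τ * (∑ j ∈ s, r j - ∑ j ∈ s, max (z j - τ) 0) := by rw [hr1, hτ]; ring
    _ = ∑ j ∈ s, -τ * (r j - max (z j - τ) 0) := by rw [← sum_sub_distrib, mul_sum]
    _ ≤ _ := sum_le_sum hpt

theorem IsSparsemaxOn.eq_max_sub (hp : IsSparsemaxOn s z p) (τ : ℝ)
    (hτ : ∑ j ∈ s, max (z j - τ) 0 = 1) : ∀ j ∈ s, p j = max (z j - τ) 0 := by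
  obtain ⟨hp0, hp1, hpmin⟩ := hp
  set q : ι → ℝ := fun j => max (z j - τ) 0
  have hmin := hpmin q (fun j _ => le_max_right _ _) hτ
  have hvar := sum_mul_sub_max_nonneg τ hτ hp0 hp1
  have hexpand : ∑ j ∈ s, (p j - z j) ^ 2 = ∑ j ∈ s, (p j - q j) ^ 2 +
      2 * ∑ j ∈ s, (p j - q j) * (q j - z j) + ∑ j ∈ s, (q j - z j) ^ 2 := by
    rw [mul_sum, ← sum_add_distrib, ← sum_add_distrib]
    exact sum_congr rfl fun j _ => by ring
  have hzero : ∑ j ∈ s, (p j - q j) ^ 2 = 0 :=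
    le_antisymm (by linarith) (sum_nonneg fun _ _ => sq_nonneg _)
  intro j hj
  have := (sum_eq_zero_iff_of_nonneg fun _ _ => sq_nonneg _).1 hzero j hj
  exact sub_eq_zero.1 (pow_eq_zero_iff two_ne_zero |>.1 this)

theorem IsSparsemaxOn.eq_uniform_of_le [DecidableEq ι] {T : Finset ι}
    (hp : IsSparsemaxOn s z p) (hT : (s ∩ T).Nonempty) (hz0 : ∀ j ∈ s ∩ T, z j = 0)
    (hzle : ∀ j ∈ s \ T, z j ≤ -(1 / #(s ∩ T))) :
    (∀ j ∈ s \ T, p j = 0) ∧ ∀ j ∈ s ∩ T, p j = 1 / #(s ∩ T) := by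
  have hcard : (0 : ℝ) < #(s ∩ T) := by exact_mod_cast hT.card_pos
  have hin : ∀ j ∈ s ∩ T, max (z j - -(1 / #(s ∩ T))) 0 = 1 / #(s ∩ T) := fun j hj => by
    rw [hz0 j hj, zero_sub, neg_neg, max_eq_left (by positivity)]
  have hout : ∀ j ∈ s \ T, max (z j - -(1 / #(s ∩ T))) 0 = 0 := fun j hj =>
    max_eq_right (by linarith [hzle j hj])
  have hsum : ∑ j ∈ s, max (z j - -(1 / #(s ∩ T))) 0 = 1 := by
    rw [← sum_inter_add_sum_sdiff s T, sum_congr rfl hin, sum_congr rfl hout]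
    simp [hcard.ne']
  have hpq := hp.eq_max_sub _ hsum
  exact ⟨fun j hj => (hpq j (sdiff_subset hj)).trans (hout j hj),
    fun j hj => (hpq j (inter_subset_left hj)).trans (hin j hj)⟩

end Sparsemax

theorem weights_at_consensus {V : Type*} [Fintype V] [DecidableEq V] {d : ℕ}
    (H : Finset V) (hH : H.Nonempty) (N : V → Finset V)
    (x : V → Fin d → ℝ) (xbar : Fin d → ℝ) (η : ℝ) (hη : 0 < η)
    (hmaj : ∀ i ∈ H, (N i ∩ Hᶜ).card < (N i ∩ H).card)
    (hhonest : ∀ i ∈ H, x i = xbar)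
    (δmin : ℕ) (hδ : δmin = H.inf' hH fun i => (N i ∩ H).card)
    (hbyz : ∀ i ∈ H, ∀ k ∈ N i ∩ Hᶜ, 1 / (η * (δmin : ℝ)) ≤ ‖x k - xbar‖)
    (i : V) (hi : i ∈ H)
    (cm : Fin d → ℝ) (hcm : ∀ k, IsMedian (N i) (fun j => x j k) (cm k))
    (p : V → ℝ) (hp : IsSparsemaxOn (N i) (fun j => -η * ‖x j - cm‖) p) :
    (∀ j ∈ N i ∩ Hᶜ, p j = 0) ∧
    (∀ j ∈ N i ∩ H, p j = 1 / (((N i ∩ H).card : ℝ))) := by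
  simp only [← sdiff_eq_inter_compl] at hmaj hbyz ⊢
  have hcm_eq : cm = xbar := funext fun k =>
    (hcm k).eq_of_card_sdiff_lt (hmaj i hi) fun j hj => by rw [hhonest j (mem_inter.1 hj).2]
  have hδpos : 0 < δmin := hδ ▸ (lt_inf'_iff _).2 fun i' hi' => (Nat.zero_le _).trans_lt (hmaj i' hi')
  have hδle : δmin ≤ #(N i ∩ H) := hδ ▸ inf'_le _ hi
  refine hp.eq_uniform_of_le (card_pos.1 ((Nat.zero_le _).trans_lt (hmaj i hi)))
    (fun j hj => by simp [hhonest j (mem_inter.1 hj).2, hcm_eq]) fun j hj => ?_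
  calc -η * ‖x j - cm‖ ≤ -η * (1 / (η * δmin)) := by
        rw [hcm_eq]; nlinarith [hbyz i hi j hj]
    _ = -(1 / δmin) := by field_simp
    _ ≤ -(1 / #(N i ∩ H)) :=
        neg_le_neg (one_div_le_one_div_of_le (by exact_mod_cast hδpos) (by exact_mod_cast hδle))
end

section
/- Let i be an honest node with honest-majority neighbors (|N_i ∩ H| ≥ |N_i ∩ B|, both nonzero counts with |N_i ∩ H| ≥ |N_i ∩ B| and |N_i ∩ H| ≥ 1). Let L_j = ‖x_j − cm_i‖_∞ be the coordinate-wise median loss, let D_H be the honest diameter in the sup-norm so that L_k ≤ D_H for all honest neighbors k, and define softmax weights p_j = e^{−η L_j}/∑_{k ∈ N_i} e^{−η L_k} with η > 0. Then ∑_{j ∈ N_i ∩ B} p_j · L_j ≤ (|N_i ∩ B| / |N_i ∩ H|) · e^{η D_H}/(η e) ≤ e^{η D_H}/(η e). -/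
/-!
Each Byzantine term `p_j L_j` is `e^{-η L_j} L_j / Z`. The numerator is at most `1 / (η e)`
because `y e^{-y} ≤ e^{-1}`, and the normaliser `Z` is at least `|N_i ∩ H| e^{-η D_H}` because
every honest loss is at most `D_H`. Summing over the `|N_i ∩ B|` Byzantine neighbours gives the
first bound; honest majority gives the second.
-/

open Real Finset

theorem exp_neg_mul_mul_le {η : ℝ} (hη : 0 < η) (t : ℝ) :
    exp (-η * t) * t ≤ 1 / (η * exp 1) := by
  rw [le_div_iff₀ (by positivity)]
  calc exp (-η * t) * t * (η * exp 1) = η * t * exp (-(η * t)) * exp 1 := by ring_nf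
    _ ≤ exp (-1) * exp 1 := by gcongr; exact mul_exp_neg_le_exp_neg_one _
    _ = 1 := by rw [← exp_add]; simp

theorem card_mul_exp_neg_le_sum_exp {ι : Type*} {s t : Finset ι} (hst : s ⊆ t) {η D : ℝ}
    (hη : 0 ≤ η) {L : ι → ℝ} (hL : ∀ k ∈ s, L k ≤ D) :
    s.card * exp (-η * D) ≤ ∑ k ∈ t, exp (-η * L k) := by
  calc (s.card : ℝ) * exp (-η * D) ≤ ∑ k ∈ s, exp (-η * L k) := by
        rw [← nsmul_eq_mul]
        exact card_nsmul_le_sum _ _ _ fun k hk => exp_le_exp.mpr (by nlinarith [hL k hk])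
    _ ≤ ∑ k ∈ t, exp (-η * L k) :=
        sum_le_sum_of_subset_of_nonneg hst fun _ _ _ => (exp_pos _).le

theorem sum_softmax_mul_le {ι : Type*} (s t : Finset ι) {η c : ℝ} (hη : 0 < η) (hc : 0 < c)
    (L : ι → ℝ) (hZ : c ≤ ∑ k ∈ t, exp (-η * L k)) :
    ∑ j ∈ s, exp (-η * L j) / (∑ k ∈ t, exp (-η * L k)) * L j
      ≤ s.card / (c * (η * exp 1)) := by
  set Z := ∑ k ∈ t, exp (-η * L k)
  have hterm : ∀ j ∈ s, exp (-η * L j) / Z * L j ≤ 1 / (c * (η * exp 1)) := fun j _ =>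
    calc exp (-η * L j) / Z * L j = exp (-η * L j) * L j / Z := div_mul_eq_mul_div _ _ _
      _ ≤ 1 / (η * exp 1) / Z :=
          div_le_div_of_nonneg_right (exp_neg_mul_mul_le hη _) (hc.trans_le hZ).le
      _ ≤ 1 / (η * exp 1) / c := div_le_div_of_nonneg_left (by positivity) hc hZ
      _ = 1 / (c * (η * exp 1)) := by rw [div_div, mul_comm]
  calc ∑ j ∈ s, exp (-η * L j) / Z * L j ≤ ∑ _j ∈ s, 1 / (c * (η * exp 1)) := sum_le_sum hterm
    _ = s.card / (c * (η * exp 1)) := by rw [sum_const, nsmul_eq_mul, mul_one_div]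

theorem softmax_byzantine_influence_general {V : Type*} [Fintype V] [DecidableEq V] {d : ℕ}
    (H Ni : Finset V)
    (x : V → Fin d → ℝ) (cm : Fin d → ℝ)
    (η : ℝ) (hη : 0 < η)
    (hmaj : (Ni ∩ Hᶜ).card ≤ (Ni ∩ H).card)
    (hHne : (Ni ∩ H).Nonempty)
    (DH : ℝ)
    (hL : ∀ k ∈ Ni ∩ H, ‖x k - cm‖ ≤ DH) :
    (∑ j ∈ Ni ∩ Hᶜ,
        (Real.exp (-η * ‖x j - cm‖) / ∑ k ∈ Ni, Real.exp (-η * ‖x k - cm‖))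
          * ‖x j - cm‖)
      ≤ (((Ni ∩ Hᶜ).card : ℝ) / ((Ni ∩ H).card : ℝ)) *
          (Real.exp (η * DH) / (η * Real.exp 1)) ∧
    (((Ni ∩ Hᶜ).card : ℝ) / ((Ni ∩ H).card : ℝ)) *
        (Real.exp (η * DH) / (η * Real.exp 1))
      ≤ Real.exp (η * DH) / (η * Real.exp 1) := by
  have hH : (0 : ℝ) < (Ni ∩ H).card := by exact_mod_cast hHne.card_pos
  have hZ := card_mul_exp_neg_le_sum_exp inter_subset_left hη.le
    (L := fun k => ‖x k - cm‖) hL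
  refine ⟨(sum_softmax_mul_le _ _ hη (by positivity) _ hZ).trans_eq ?_, ?_⟩
  · rw [neg_mul, exp_neg]
    field_simp
  · exact mul_le_of_le_one_left (by positivity) ((div_le_one hH).mpr (by exact_mod_cast hmaj))

theorem softmax_byzantine_influence {V : Type*} [Fintype V] [DecidableEq V] {d : ℕ}
    (H Ni : Finset V) (i : V) (hi : i ∈ H)
    (x : V → Fin d → ℝ) (cm : Fin d → ℝ)
    (hcm : ∀ k, IsMedian Ni (fun j => x j k) (cm k))
    (η : ℝ) (hη : 0 < η)
    (hmaj : (Ni ∩ Hᶜ).card ≤ (Ni ∩ H).card)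
    (hHne : (Ni ∩ H).Nonempty) (hBne : (Ni ∩ Hᶜ).Nonempty)
    (DH : ℝ)
    (hDH : DH = (H ×ˢ H).sup' ⟨(i, i), Finset.mem_product.mpr ⟨hi, hi⟩⟩
      fun uv => ‖x uv.1 - x uv.2‖)
    (hL : ∀ k ∈ Ni ∩ H, ‖x k - cm‖ ≤ DH) :
    (∑ j ∈ Ni ∩ Hᶜ,
        (Real.exp (-η * ‖x j - cm‖) / ∑ k ∈ Ni, Real.exp (-η * ‖x k - cm‖))
          * ‖x j - cm‖)
      ≤ (((Ni ∩ Hᶜ).card : ℝ) / ((Ni ∩ H).card : ℝ)) *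
          (Real.exp (η * DH) / (η * Real.exp 1)) ∧
    (((Ni ∩ Hᶜ).card : ℝ) / ((Ni ∩ H).card : ℝ)) *
        (Real.exp (η * DH) / (η * Real.exp 1))
      ≤ Real.exp (η * DH) / (η * Real.exp 1) :=
  softmax_byzantine_influence_general H Ni x cm η hη hmaj hHne DH hL
end

section
/- Let a finite set of points {x_v}_{v ∈ N} ⊂ ℝ^d be partitioned into honest points indexed by H' = N ∩ H and Byzantine points indexed by N ∩ B, with 2|H'| > |N|. Let g be a geometric median of {x_v}_{v ∈ N}, i.e., a minimizer of x ↦ ∑_{v ∈ N} ‖x − x_v‖₂. Then for every honest index j ∈ H', ‖x_j − g‖₂ ≤ (|N| / (2|H'| − |N|)) · D, where D = max_{k,m ∈ H'} ‖x_k − x_m‖₂. -/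
/-!
If `‖x j - g‖ = r` exceeds the diameter `D` of the honest points, every honest point `x k` is
seen from `g` in a direction making an angle with `x j - g` whose cosine is at least
`(r - D) / (r + D)`. Moving `g` towards `x j` therefore decreases each of the `|H'|` honest
distances at rate at least `(r - D) / (r + D)`, while it increases each of the other
`|N| - |H'|` distances at rate at most `1`. Minimality of `g` forces
`|H'| (r - D) ≤ (|N| - |H'|) (r + D)`, i.e. `(2|H'| - |N|) r ≤ |N| D`.
-/

open Finset Filter Topology
open scoped InnerProductSpace

lemma le_of_forall_pos_le_add_mul {a b C : ℝ} (h : ∀ t > 0, a ≤ b + t * C) : a ≤ b := by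
  have hlim : Tendsto (fun t : ℝ => b + t * C) (𝓝[>] 0) (𝓝 b) := by
    have : Continuous fun t : ℝ => b + t * C := by fun_prop
    simpa using (this.tendsto 0).mono_left nhdsWithin_le_nhds
  exact ge_of_tendsto hlim (eventually_nhdsWithin_of_forall h)

section InnerProductSpace

variable {E : Type*} [NormedAddCommGroup E] [InnerProductSpace ℝ E]

/-- `√(a² + e) ≤ a + e / (2a)`, applied to `‖p - t • u‖² = ‖p‖² - 2t⟪u, p⟫ + t²‖u‖²`. -/
lemma norm_sub_smul_le (p u : E) (hp : p ≠ 0) (t : ℝ) :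
    ‖p - t • u‖ ≤ ‖p‖ - t * (⟪u, p⟫_ℝ / ‖p‖) + t ^ 2 * (‖u‖ ^ 2 / (2 * ‖p‖)) := by
  have hp' : 0 < ‖p‖ := norm_pos_iff.mpr hp
  have hsq : ‖p - t • u‖ ^ 2 = ‖p‖ ^ 2 - 2 * t * ⟪u, p⟫_ℝ + t ^ 2 * ‖u‖ ^ 2 := by
    rw [norm_sub_sq_real, norm_smul, real_inner_smul_right, real_inner_comm, mul_pow,
      Real.norm_eq_abs, sq_abs]
    ring
  have hrhs : ‖p‖ - t * (⟪u, p⟫_ℝ / ‖p‖) + t ^ 2 * (‖u‖ ^ 2 / (2 * ‖p‖))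
      = (2 * ‖p‖ ^ 2 - 2 * t * ⟪u, p⟫_ℝ + t ^ 2 * ‖u‖ ^ 2) / (2 * ‖p‖) := by
    field_simp
  rw [hrhs, le_div_iff₀ (by positivity)]
  nlinarith [sq_nonneg (‖p - t • u‖ - ‖p‖)]

lemma mul_sub_div_add_le_inner_div_norm {a p : E} {D : ℝ} (hD : D < ‖a‖) (hpa : ‖p - a‖ ≤ D) :
    ‖a‖ * (‖a‖ - D) / (‖a‖ + D) ≤ ⟪a, p⟫_ℝ / ‖p‖ := by
  have hD0 : 0 ≤ D := (norm_nonneg _).trans hpa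
  have hinner : ‖a‖ * (‖a‖ - D) ≤ ⟪a, p⟫_ℝ := by
    have hcs : -(‖a‖ * ‖p - a‖) ≤ ⟪a, p - a⟫_ℝ := neg_le_of_abs_le (abs_real_inner_le_norm _ _)
    have hp : p = a + (p - a) := by abel
    rw [hp, inner_add_right, real_inner_self_eq_norm_sq]
    nlinarith [norm_nonneg a]
  have hp_lower : ‖a‖ - D ≤ ‖p‖ := by
    have := norm_sub_norm_le a p
    rw [← norm_neg (a - p), neg_sub] at this
    linarith
  have hp_upper : ‖p‖ ≤ ‖a‖ + D := by
    calc ‖p‖ = ‖a + (p - a)‖ := by rw [add_sub_cancel]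
      _ ≤ ‖a‖ + D := (norm_add_le _ _).trans (by linarith)
  exact div_le_div₀ ((mul_nonneg (norm_nonneg a) (by linarith)).trans hinner) hinner
    (by linarith) hp_upper

variable {ι : Type*} [DecidableEq ι] {N H : Finset ι} {x : ι → E} {g : E}

/-- Nonnegativity of the directional derivative along `u` at the minimizer `g`; the terms outside
`H`, which may vanish at `g`, are bounded by their Lipschitz constant `‖u‖`. -/
theorem sum_inner_div_norm_le_of_forall_sum_norm_le (hHN : H ⊆ N)
    (hg : ∀ y, ∑ v ∈ N, ‖g - x v‖ ≤ ∑ v ∈ N, ‖y - x v‖) (hH : ∀ k ∈ H, x k ≠ g) (u : E) :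
    ∑ k ∈ H, ⟪u, x k - g⟫_ℝ / ‖x k - g‖ ≤ #(N \ H) * ‖u‖ := by
  set S := ∑ k ∈ H, ⟪u, x k - g⟫_ℝ / ‖x k - g‖
  set C := ∑ k ∈ H, ‖u‖ ^ 2 / (2 * ‖x k - g‖)
  refine le_of_forall_pos_le_add_mul (C := C) fun t ht => ?_
  have hothers : ∑ v ∈ N \ H, ‖g + t • u - x v‖ ≤
      ∑ v ∈ N \ H, ‖g - x v‖ + (#(N \ H) : ℝ) * (t * ‖u‖) := by
    rw [← nsmul_eq_mul, ← sum_const, ← sum_add_distrib]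
    refine sum_le_sum fun v _ => ?_
    calc ‖g + t • u - x v‖ = ‖(g - x v) + t • u‖ := by rw [add_sub_right_comm]
      _ ≤ ‖g - x v‖ + t * ‖u‖ :=
        (norm_add_le _ _).trans_eq (by rw [norm_smul, Real.norm_of_nonneg ht.le])
  have hH_terms : ∑ k ∈ H, ‖g + t • u - x k‖ ≤ ∑ k ∈ H, ‖g - x k‖ - t * S + t ^ 2 * C := by
    rw [mul_sum, mul_sum, ← sum_sub_distrib, ← sum_add_distrib]
    refine sum_le_sum fun k hk => ?_
    rw [norm_sub_rev g, show g + t • u - x k = -(x k - g - t • u) by abel, norm_neg]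
    exact norm_sub_smul_le _ u (sub_ne_zero.mpr (hH k hk)) t
  have hmin := hg (g + t • u)
  rw [← sum_sdiff hHN, ← sum_sdiff hHN (f := fun v => ‖g + t • u - x v‖)] at hmin
  have : t * S ≤ t * (#(N \ H) * ‖u‖ + t * C) := by linarith
  exact le_of_mul_le_mul_left this ht

theorem sub_mul_norm_sub_le_of_forall_sum_norm_le (hHN : H ⊆ N)
    (hg : ∀ y, ∑ v ∈ N, ‖g - x v‖ ≤ ∑ v ∈ N, ‖y - x v‖) {D : ℝ}
    (hD : ∀ k ∈ H, ∀ m ∈ H, ‖x k - x m‖ ≤ D) {j : ι} (hj : j ∈ H) :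
    (2 * #H - #N : ℝ) * ‖x j - g‖ ≤ #N * D := by
  set r := ‖x j - g‖
  have hD0 : 0 ≤ D := by simpa using hD j hj j hj
  have hHN' : (#H : ℝ) ≤ #N := by exact_mod_cast card_le_card hHN
  rcases le_or_gt r D with hrD | hrD
  · nlinarith [norm_nonneg (x j - g)]
  have hH : ∀ k ∈ H, x k ≠ g := by
    rintro k hk rfl
    exact hrD.not_ge (hD j hj k hk)
  have hupper := sum_inner_div_norm_le_of_forall_sum_norm_le hHN hg hH (x j - g)
  have hlower : #H * (r * (r - D) / (r + D)) ≤ ∑ k ∈ H, ⟪x j - g, x k - g⟫_ℝ / ‖x k - g‖ := by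
    rw [← nsmul_eq_mul, ← sum_const]
    refine sum_le_sum fun k hk => mul_sub_div_add_le_inner_div_norm hrD ?_
    rw [sub_sub_sub_cancel_right]
    exact hD k hk j hj
  rw [cast_card_sdiff hHN] at hupper
  have hrD' : 0 < r + D := by linarith
  have key := hlower.trans hupper
  rw [mul_div_assoc', div_le_iff₀ hrD'] at key
  have hr : 0 < r := hD0.trans_lt hrD
  have : (2 * #H - #N : ℝ) * r * r ≤ #N * D * r := by linear_combination key
  exact le_of_mul_le_mul_right this hr

end InnerProductSpace

theorem geometric_median_honest_bound {ι : Type*} [DecidableEq ι] {d : ℕ}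
    (N Hs : Finset ι) (x : ι → EuclideanSpace ℝ (Fin d))
    (g : EuclideanSpace ℝ (Fin d))
    (hmaj : N.card < 2 * (N ∩ Hs).card)
    (hne : (N ∩ Hs).Nonempty)
    (hg : ∀ y : EuclideanSpace ℝ (Fin d),
      ∑ v ∈ N, ‖g - x v‖ ≤ ∑ v ∈ N, ‖y - x v‖)
    (D : ℝ)
    (hD : D = ((N ∩ Hs) ×ˢ (N ∩ Hs)).sup' (hne.product hne)
      fun uv => ‖x uv.1 - x uv.2‖) :
    ∀ j ∈ N ∩ Hs,
      ‖x j - g‖ ≤ ((N.card : ℝ) / (2 * ((N ∩ Hs).card : ℝ) - (N.card : ℝ))) * D := by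
  intro j hj
  have hdiam : ∀ k ∈ N ∩ Hs, ∀ m ∈ N ∩ Hs, ‖x k - x m‖ ≤ D := fun k hk m hm =>
    hD ▸ le_sup' (fun uv : ι × ι => ‖x uv.1 - x uv.2‖) (b := (k, m)) (mem_product.mpr ⟨hk, hm⟩)
  have hbound := sub_mul_norm_sub_le_of_forall_sum_norm_le inter_subset_left hg hdiam hj
  have hpos : (0 : ℝ) < 2 * #(N ∩ Hs) - #N := by
    have : (#N : ℝ) < 2 * #(N ∩ Hs) := by exact_mod_cast hmaj
    linarith
  rw [div_mul_eq_mul_div, le_div_iff₀ hpos]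
  linarith
end

section
/- Let i be a node whose neighbor states satisfy: all honest neighbors k ∈ N_i ∩ H have loss L_k ≤ D, and some neighbor j has loss L_j > D, where L are nonnegative reals and the weights are p = sparsemax((−η L_v)_{v ∈ N_i}) with η > 0. If p_j > 0, then p_k > 0 for every honest neighbor k, and moreover p_k ≥ −η D − τ where τ is the sparsemax threshold; consequently 1 ≥ |N_i ∩ H|·(−ηD − τ) and −ηL_j > τ together force L_j < D + 1/(η|N_i ∩ H|). -/
open Finset

section ThresholdWeights

variable {ι : Type*} {s : Finset ι} {z p : ι → ℝ} {τ : ℝ}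

theorem lt_of_max_sub_zero_pos {a : ℝ} (h : 0 < max (a - τ) 0) : τ < a := by
  simpa [lt_max_iff] using h

theorem sub_le_of_eq_max_sub (hrep : ∀ v ∈ s, p v = max (z v - τ) 0) {k : ι} (hk : k ∈ s)
    {c : ℝ} (hc : c ≤ z k) : c - τ ≤ p k := by
  rw [hrep k hk]
  exact le_max_of_le_left (by linarith)

theorem nonneg_of_eq_max_sub (hrep : ∀ v ∈ s, p v = max (z v - τ) 0) {v : ι} (hv : v ∈ s) :
    0 ≤ p v :=
  hrep v hv ▸ le_max_right _ _

theorem card_mul_sub_le_one_of_eq_max_sub (hrep : ∀ v ∈ s, p v = max (z v - τ) 0)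
    (hsum : ∑ v ∈ s, p v = 1) {t : Finset ι} (hts : t ⊆ s) {c : ℝ} (hc : ∀ k ∈ t, c ≤ z k) :
    (#t : ℝ) * (c - τ) ≤ 1 :=
  calc (#t : ℝ) * (c - τ) = ∑ _k ∈ t, (c - τ) := by rw [sum_const, nsmul_eq_mul]
    _ ≤ ∑ k ∈ t, p k := sum_le_sum fun k hk => sub_le_of_eq_max_sub hrep (hts hk) (hc k hk)
    _ ≤ ∑ v ∈ s, p v := sum_le_sum_of_subset_of_nonneg hts fun v hv _ =>
        nonneg_of_eq_max_sub hrep hv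
    _ = 1 := hsum

end ThresholdWeights

theorem truncation_key_step_general {V : Type*} [DecidableEq V]
    (Ni Hs : Finset V) (L : V → ℝ)
    (D η : ℝ) (hη : 0 < η)
    (hne : (Ni ∩ Hs).Nonempty)
    (hhon : ∀ k ∈ Ni ∩ Hs, L k ≤ D)
    (j : V) (hj : j ∈ Ni) (hjD : D < L j)
    (p : V → ℝ) (τ : ℝ)
    (hrep : ∀ v ∈ Ni, p v = max (-η * L v - τ) 0)
    (hsum : ∑ v ∈ Ni, p v = 1)
    (hpj : 0 < p j) :
    (∀ k ∈ Ni ∩ Hs, 0 < p k ∧ -η * D - τ ≤ p k) ∧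
    ((Ni ∩ Hs).card : ℝ) * (-η * D - τ) ≤ 1 ∧
    τ < -η * L j ∧
    L j < D + 1 / (η * ((Ni ∩ Hs).card : ℝ)) := by
  have hτ : τ < -η * L j := lt_of_max_sub_zero_pos (hrep j hj ▸ hpj)
  have hjk : -η * L j < -η * D := by nlinarith
  have hscore : ∀ k ∈ Ni ∩ Hs, -η * D ≤ -η * L k := fun k hk => by nlinarith [hhon k hk]
  have hpk : ∀ k ∈ Ni ∩ Hs, -η * D - τ ≤ p k := fun k hk =>
    sub_le_of_eq_max_sub (z := fun v => -η * L v) hrep (mem_inter.1 hk).1 (hscore k hk)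
  have hcount : (#(Ni ∩ Hs) : ℝ) * (-η * D - τ) ≤ 1 :=
    card_mul_sub_le_one_of_eq_max_sub (z := fun v => -η * L v) hrep hsum inter_subset_left hscore
  refine ⟨fun k hk => ⟨by linarith [hpk k hk], hpk k hk⟩, hcount, hτ, ?_⟩
  have hcard : (0 : ℝ) < #(Ni ∩ Hs) := by exact_mod_cast hne.card_pos
  rw [← sub_lt_iff_lt_add', lt_div_iff₀ (mul_pos hη hcard)]
  nlinarith

theorem truncation_key_step {V : Type*} [DecidableEq V]
    (Ni Hs : Finset V) (L : V → ℝ) (hL : ∀ v, 0 ≤ L v)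
    (D η : ℝ) (hη : 0 < η)
    (hne : (Ni ∩ Hs).Nonempty)
    (hhon : ∀ k ∈ Ni ∩ Hs, L k ≤ D)
    (j : V) (hj : j ∈ Ni) (hjD : D < L j)
    (p : V → ℝ) (τ : ℝ)
    (hrep : ∀ v ∈ Ni, p v = max (-η * L v - τ) 0)
    (hsum : ∑ v ∈ Ni, p v = 1)
    (hpj : 0 < p j) :
    (∀ k ∈ Ni ∩ Hs, 0 < p k ∧ -η * D - τ ≤ p k) ∧
    ((Ni ∩ Hs).card : ℝ) * (-η * D - τ) ≤ 1 ∧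
    τ < -η * L j ∧
    L j < D + 1 / (η * ((Ni ∩ Hs).card : ℝ)) :=
  truncation_key_step_general Ni Hs L D η hη hne hhon j hj hjD p τ hrep hsum hpj
end
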